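/- If the Grover walk on a finite connected regular graph G of degree k is periodic, and all adjacency eigenvalues of G are integers, then every adjacency eigenvalue lies in {±k, ±k/2, 0}. -/

import Mathlib

open Matrix Complex

variable {V : Type*} [Fintype V] [DecidableEq V]

instance (G : SimpleGraph V) : DecidableEq G.Dart :=
  fun a b => decidable_of_iff _ (SimpleGraph.Dart.ext_iff a b).symm

/-- The flip-flop shift on the arc (dart) space. -/
noncomputable def groverShift (G : SimpleGraph V) [DecidableRel G.Adj] :
    Matrix G.Dart G.Dart ℂ :=
  fun a b => if b = a.symm then 1 else 0

/-- The Grover coin, acting blockwise on arcs grouped by tail vertex: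
the block at a vertex `v` of degree `d` is `2/d J - I`. -/
noncomputable def groverCoin (G : SimpleGraph V) [DecidableRel G.Adj] :
    Matrix G.Dart G.Dart ℂ :=
  fun a b => (if a.toProd.1 = b.toProd.1 then (2 : ℂ) / (G.degree a.toProd.1) else 0)
    - (if a = b then 1 else 0)

/-- The Grover walk time-evolution operator `U = S C`. -/
noncomputable def groverU (G : SimpleGraph V) [DecidableRel G.Adj] :
    Matrix G.Dart G.Dart ℂ := groverShift G * groverCoin G

/-- The transition matrix `P = D⁻¹ A` of the simple random walk, over `ℂ`. -/
noncomputable def transMat (G : SimpleGraph V) [DecidableRel G.Adj] :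
    Matrix V V ℂ :=
  fun u v => if G.Adj u v then (1 : ℂ) / (G.degree u) else 0

/-- The boundary map `d : ℂ^V → ℂ^A`, `(dφ)(a) = φ(t(a))/√(deg t(a))`. -/
noncomputable def boundaryMap (G : SimpleGraph V) [DecidableRel G.Adj]
    (φ : V → ℂ) : G.Dart → ℂ :=
  fun a => φ a.toProd.2 / (Real.sqrt (G.degree a.toProd.2) : ℝ)

/-! If `transMat G *ᵥ φ = μ • φ` and `ω ^ 2 + 1 = 2 μ ω`, the arc function
`d ↦ ω φ(d.snd) - φ(d.fst)` is an eigenvector of `U = S C` for `ω`, unless it vanishes, which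
along an edge forces `ω ^ 2 = 1`. Periodicity of `U` thus makes `ω` a root of unity, so
`μ = (ω + ω⁻¹) / 2 = cos (r π)` with `r` rational. On a `k`-regular graph `μ = λ / k` is
rational when `λ` is an integer, and Niven's theorem leaves `μ ∈ {0, ±1/2, ±1}`. -/

open Finset

theorem exists_rat_add_inv_eq_two_mul_cos {ω : ℂ} {n : ℕ} (hn : n ≠ 0) (hω : ω ^ n = 1) :
    ∃ r : ℚ, ω + ω⁻¹ = 2 * Real.cos (r * Real.pi) := by
  have := NeZero.mk hn
  obtain ⟨i, -, rfl⟩ := (Complex.isPrimitiveRoot_exp n hn).eq_pow_of_pow_eq_one hω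
  refine ⟨2 * i / n, ?_⟩
  rw [← Complex.exp_nat_mul, ← Complex.exp_neg, Complex.ofReal_cos, Complex.two_cos]
  congr 2 <;> push_cast <;> field_simp

theorem mem_niven_of_pow_eq_one {ω : ℂ} {n : ℕ} (hn : n ≠ 0) (hω : ω ^ n = 1) {μ : ℝ}
    (hμ : ω + ω⁻¹ = 2 * μ) (hμq : ∃ q : ℚ, μ = q) :
    μ ∈ ({-1, -1 / 2, 0, 1 / 2, 1} : Set ℝ) := by
  obtain ⟨r, hr⟩ := exists_rat_add_inv_eq_two_mul_cos hn hω
  have hcos : Real.cos (r * Real.pi) = μ := by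
    have := hr.symm.trans hμ
    exact_mod_cast mul_left_cancel₀ two_ne_zero this
  rw [← hcos] at hμq ⊢
  exact niven ⟨r, rfl⟩ hμq

theorem pow_eq_one_of_mulVec_eq_smul {ι R : Type*} [Fintype ι] [DecidableEq ι] [CommRing R]
    [IsDomain R] {M : Matrix ι ι R} {t : ℕ} (hM : M ^ t = 1) {ψ : ι → R} (hψ : ψ ≠ 0) {ω : R}
    (hMψ : M *ᵥ ψ = ω • ψ) : ω ^ t = 1 := by
  have hpow : ∀ n : ℕ, (M ^ n) *ᵥ ψ = ω ^ n • ψ := by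
    intro n
    induction n with
    | zero => simp
    | succ n ih =>
      rw [pow_succ, ← Matrix.mulVec_mulVec, hMψ, Matrix.mulVec_smul, ih, smul_smul, pow_succ']
  refine smul_left_injective R hψ ?_
  simpa [hM] using (hpow t).symm

namespace SimpleGraph

theorem transMat_mulVec_apply {W : Type*} [Fintype W] (G : SimpleGraph W) [DecidableRel G.Adj]
    (φ : W → ℂ) (v : W) :
    (transMat G *ᵥ φ) v = (∑ u ∈ G.neighborFinset v, φ u) / G.degree v := by
  simp only [transMat, Matrix.mulVec, dotProduct, ite_mul, zero_mul, ← sum_filter,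
    ← neighborFinset_eq_filter, ← sum_div, one_div_mul_eq_div]

variable (G : SimpleGraph V) [DecidableRel G.Adj]

theorem sum_dart_fst_eq_sum_neighborFinset {M : Type*} [AddCommMonoid M] (f : V → M) (v : V) :
    ∑ d ∈ univ.filter (fun d : G.Dart => d.fst = v), f d.snd = ∑ u ∈ G.neighborFinset v, f u := by
  refine sum_bij (fun d _ => d.snd) (fun d hd => ?_) (fun d₁ hd₁ d₂ hd₂ h => ?_)
    (fun u hu => ?_) fun _ _ => rfl
  · rw [mem_filter] at hd
    simp [← hd.2]
  · rw [mem_filter] at hd₁ hd₂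
    exact Dart.ext _ _ (Prod.ext (hd₁.2.trans hd₂.2.symm) h)
  · exact ⟨⟨(v, u), (G.mem_neighborFinset v u).mp hu⟩, by simp, rfl⟩

theorem groverShift_mulVec_apply (ψ : G.Dart → ℂ) (d : G.Dart) :
    (groverShift G *ᵥ ψ) d = ψ d.symm := by
  simp [groverShift, Matrix.mulVec, dotProduct]

theorem groverCoin_mulVec_apply (ψ : G.Dart → ℂ) (d : G.Dart) :
    (groverCoin G *ᵥ ψ) d =
      2 / G.degree d.fst * ∑ b ∈ univ.filter (fun b : G.Dart => b.fst = d.fst), ψ b - ψ d := by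
  simp only [groverCoin, Matrix.mulVec, dotProduct, sub_mul, ite_mul, one_mul, zero_mul,
    sum_sub_distrib, sum_ite_eq, mul_sum, sum_filter]
  simp [eq_comm]

theorem groverU_mulVec_apply (ψ : G.Dart → ℂ) (d : G.Dart) :
    (groverU G *ᵥ ψ) d =
      2 / G.degree d.snd * ∑ b ∈ univ.filter (fun b : G.Dart => b.fst = d.snd), ψ b - ψ d.symm := by
  rw [groverU, ← Matrix.mulVec_mulVec, groverShift_mulVec_apply, groverCoin_mulVec_apply]
  rfl

def dartLift (ω : ℂ) (φ : V → ℂ) (d : G.Dart) : ℂ := ω * φ d.snd - φ d.fst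

theorem groverU_mulVec_dartLift {μ ω : ℂ} {φ : V → ℂ} (hφ : transMat G *ᵥ φ = μ • φ)
    (hω : ω ^ 2 + 1 = 2 * μ * ω) : groverU G *ᵥ G.dartLift ω φ = ω • G.dartLift ω φ := by
  funext d
  have hdeg : (G.degree d.snd : ℂ) ≠ 0 :=
    Nat.cast_ne_zero.mpr (G.degree_pos_iff_exists_adj d.snd |>.mpr ⟨_, d.symm.adj⟩).ne'
  have hneighbors : ∑ u ∈ G.neighborFinset d.snd, φ u = G.degree d.snd * μ * φ d.snd := by
    have hμ := congrFun hφ d.snd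
    rw [transMat_mulVec_apply, div_eq_iff hdeg, Pi.smul_apply, smul_eq_mul] at hμ
    rw [hμ]
    ring
  have hfiber : ∑ b ∈ univ.filter (fun b : G.Dart => b.fst = d.snd), G.dartLift ω φ b
      = G.degree d.snd * (ω * μ - 1) * φ d.snd := by
    have hfst : ∑ b ∈ univ.filter (fun b : G.Dart => b.fst = d.snd), φ b.fst
        = G.degree d.snd * φ d.snd := by
      rw [sum_congr rfl fun b hb => congrArg φ (mem_filter.mp hb).2,
        sum_dart_fst_eq_sum_neighborFinset G (fun _ => φ d.snd), sum_const,
        card_neighborFinset_eq_degree, nsmul_eq_mul]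
    simp only [dartLift, sum_sub_distrib, ← mul_sum, sum_dart_fst_eq_sum_neighborFinset, hfst,
      hneighbors]
    ring
  rw [groverU_mulVec_apply, hfiber, ← mul_assoc, ← mul_assoc, div_mul_cancel₀ _ hdeg]
  simp only [dartLift, Pi.smul_apply, smul_eq_mul, Dart.symm_toProd, Prod.fst_swap, Prod.snd_swap]
  linear_combination (-φ d.snd) * hω

theorem transMat_eigenvalue_mem_of_groverU_pow_eq_one {t : ℕ} (ht : t ≠ 0)
    (hper : groverU G ^ t = 1) (hdeg : ∀ v, 0 < G.degree v) {φ : V → ℂ} (hφ0 : φ ≠ 0) {μ : ℝ}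
    (hφ : transMat G *ᵥ φ = (μ : ℂ) • φ) (hμ : ∃ q : ℚ, μ = q) :
    μ ∈ ({-1, -1 / 2, 0, 1 / 2, 1} : Set ℝ) := by
  obtain ⟨ω, hω⟩ : ∃ ω : ℂ, ω ^ 2 + 1 = 2 * μ * ω := by
    obtain ⟨s, hs⟩ := IsAlgClosed.exists_pow_nat_eq (discrim 1 (-2 * (μ : ℂ)) 1) two_pos
    obtain ⟨ω, hω⟩ := exists_quadratic_eq_zero one_ne_zero ⟨s, by rw [← hs, sq]⟩
    exact ⟨ω, by linear_combination hω⟩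
  have hω0 : ω ≠ 0 := by rintro rfl; norm_num at hω
  obtain ⟨n, hn, hωn⟩ : ∃ n ≠ 0, ω ^ n = 1 := by
    by_cases hlift : G.dartLift ω φ = 0
    · obtain ⟨v, hv⟩ := Function.ne_iff.mp hφ0
      obtain ⟨u, hvu⟩ := G.degree_pos_iff_exists_adj v |>.mp (hdeg v)
      have hvu' := congrFun hlift ⟨(v, u), hvu⟩
      have huv' := congrFun hlift ⟨(u, v), hvu.symm⟩
      simp only [dartLift, Pi.zero_apply] at hvu' huv'
      refine ⟨2, two_ne_zero, mul_right_cancel₀ hv ?_⟩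
      linear_combination ω * huv' + hvu'
    · exact ⟨t, ht, pow_eq_one_of_mulVec_eq_smul hper hlift (groverU_mulVec_dartLift G hφ hω)⟩
  refine mem_niven_of_pow_eq_one hn hωn ?_ hμ
  field_simp
  linear_combination hω

end SimpleGraph

theorem grover_periodic_integral_spectrum_general (G : SimpleGraph V) [DecidableRel G.Adj]
    (k : ℕ) (hreg : G.IsRegularOfDegree k)
    (hper : ∃ t : ℕ, 0 < t ∧ groverU G ^ t = 1)
    (hint : ∀ lam : ℝ, (∃ x : V → ℝ, x ≠ 0 ∧ (G.adjMatrix ℝ).mulVec x = lam • x) →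
      ∃ z : ℤ, lam = z) :
    ∀ lam : ℝ, (∃ x : V → ℝ, x ≠ 0 ∧ (G.adjMatrix ℝ).mulVec x = lam • x) →
      lam ∈ ({(k : ℝ), -(k : ℝ), (k : ℝ) / 2, -((k : ℝ) / 2), 0} : Set ℝ) := by
  rintro lam ⟨x, hx0, hx⟩
  obtain ⟨z, rfl⟩ := hint _ ⟨x, hx0, hx⟩
  have hneighbors (v : V) : ∑ u ∈ G.neighborFinset v, x u = z * x v := by
    rw [← G.adjMatrix_mulVec_apply, hx, Pi.smul_apply, smul_eq_mul]
  rcases Nat.eq_zero_or_pos k with rfl | hk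
  · obtain ⟨v, hv⟩ := Function.ne_iff.mp hx0
    have hempty : G.neighborFinset v = ∅ := card_eq_zero.mp (hreg v)
    have hz := hneighbors v
    rw [hempty, sum_empty, eq_comm, mul_eq_zero] at hz
    simp [hz.resolve_right hv]
  obtain ⟨t, ht, hUt⟩ := hper
  have hk' : (k : ℝ) ≠ 0 := by positivity
  have hP : transMat G *ᵥ (fun v => (x v : ℂ)) = ((z / k : ℝ) : ℂ) • fun v => (x v : ℂ) := by
    funext v
    rw [G.transMat_mulVec_apply, hreg v, ← Complex.ofReal_sum, hneighbors v]
    simp only [Pi.smul_apply, smul_eq_mul]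
    push_cast
    ring
  have hφ0 : (fun v => (x v : ℂ)) ≠ 0 := fun h => hx0 (funext fun v => by simpa using congrFun h v)
  have hμ := G.transMat_eigenvalue_mem_of_groverU_pow_eq_one ht.ne' hUt (fun v => hreg v ▸ hk)
    hφ0 hP ⟨z / k, by push_cast; rfl⟩
  rw [show (z : ℝ) = k * (z / k) by field_simp]
  generalize (z : ℝ) / k = μ at hμ ⊢
  rcases hμ with rfl | rfl | rfl | rfl | rfl <;> simp <;> ring_nf <;> simp

/-- If the Grover walk on a connected `k`-regular graph with integral adjacency spectrum is
periodic, then every adjacency eigenvalue lies in `{±k, ±k/2, 0}`. -/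
theorem grover_periodic_integral_spectrum (G : SimpleGraph V) [DecidableRel G.Adj]
    (hG : G.Connected) (k : ℕ) (hreg : G.IsRegularOfDegree k)
    (hper : ∃ t : ℕ, 0 < t ∧ groverU G ^ t = 1)
    (hint : ∀ lam : ℝ, (∃ x : V → ℝ, x ≠ 0 ∧ (G.adjMatrix ℝ).mulVec x = lam • x) →
      ∃ z : ℤ, lam = z) :
    ∀ lam : ℝ, (∃ x : V → ℝ, x ≠ 0 ∧ (G.adjMatrix ℝ).mulVec x = lam • x) →
      lam ∈ ({(k : ℝ), -(k : ℝ), (k : ℝ) / 2, -((k : ℝ) / 2), 0} : Set ℝ) :=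
  grover_periodic_integral_spectrum_general G k hreg hper hint
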